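/- Let S be a feasible schedule and let C ⊆ T be a set of time slots with vol_S(C) = fv(C). Then vol_S(j,C) = fv(j,C) for every job j ∈ J, and every job j with fv(j,C) > 0 is scheduled (on some processor) at every slot of E_j \ C. -/

import Mathlib

/-!
A job scheduled `p j` times inside `E j` must use at least `p j - |E j \ C|` slots of `C`, so
`fv(j, C) ≤ vol_S(j, C)` for every job. A tight total forces equality job by job, and
equality with positive forced volume leaves no slot of `E j \ C` unused by `j`.
-/

open Finset

/-- Execution interval of job `j`: the slots between its release time and deadline. -/
def Ei {J : Type} (r dl : J → ℕ) (j : J) : Finset ℕ := Finset.Icc (r j) (dl j)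

/-- The time horizon `T = {0, …, d}`, where `d` is the maximal deadline. -/
def Tslots {J : Type} [Fintype J] (dl : J → ℕ) : Finset ℕ :=
  Finset.Icc 0 (Finset.univ.sup dl)

/-- A schedule assigns to each processor and slot at most one job; it is feasible if
every job `j` is assigned to exactly `p j` processor/slot pairs, all of whose slots lie
in `E j`, and no job is assigned to two different processors at the same slot. -/
def Feasible {J : Type} [Fintype J] [DecidableEq J] (r dl p : J → ℕ) (m : ℕ)
    (S : Fin m → ℕ → Option J) : Prop :=
  (∀ (k : Fin m) (t : ℕ) (j : J), S k t = some j → t ∈ Ei r dl j) ∧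
  (∀ j : J, ((Finset.univ ×ˢ Tslots dl).filter
      (fun kt : Fin m × ℕ => S kt.1 kt.2 = some j)).card = p j) ∧
  (∀ (t : ℕ) (j : J) (k k' : Fin m), S k t = some j → S k' t = some j → k = k')

/-- Number of processors busy at slot `t` in schedule `S`. -/
def volT {J : Type} [DecidableEq J] {m : ℕ} (S : Fin m → ℕ → Option J) (t : ℕ) : ℕ :=
  (Finset.univ.filter (fun k : Fin m => (S k t).isSome)).card

/-- Number of slots of `Q` at which job `j` is scheduled in `S`. -/
def volJ {J : Type} [DecidableEq J] {m : ℕ} (S : Fin m → ℕ → Option J) (j : J)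
    (Q : Finset ℕ) : ℕ :=
  (Q.filter (fun t => ∃ k, S k t = some j)).card

/-- Total volume scheduled in `Q` by `S`. -/
def volQ {J : Type} [Fintype J] [DecidableEq J] {m : ℕ} (S : Fin m → ℕ → Option J)
    (Q : Finset ℕ) : ℕ :=
  ∑ j, volJ S j Q

/-- Forced volume of job `j` in `Q`: `max {0, p j − |E j \ Q|}`. -/
def fvJ {J : Type} (r dl p : J → ℕ) (j : J) (Q : Finset ℕ) : ℕ :=
  p j - (Ei r dl j \ Q).card

/-- Total forced volume in `Q`. -/
def fvQ {J : Type} [Fintype J] (r dl p : J → ℕ) (Q : Finset ℕ) : ℕ :=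
  ∑ j, fvJ r dl p j Q

/-- Possible volume of job `j` in `Q`: `min {p j, |E j ∩ Q|}`. -/
def pvJ {J : Type} (r dl p : J → ℕ) (j : J) (Q : Finset ℕ) : ℕ :=
  min (p j) ((Ei r dl j) ∩ Q).card

/-- Total possible volume in `Q`. -/
def pvQ {J : Type} [Fintype J] (r dl p : J → ℕ) (Q : Finset ℕ) : ℕ :=
  ∑ j, pvJ r dl p j Q

namespace Finset

variable {α : Type*} [DecidableEq α] {A E C : Finset α}

theorem card_sub_card_sdiff_le_card_inter (hAE : A ⊆ E) : #A - #(E \ C) ≤ #(A ∩ C) := by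
  have hsplit := card_inter_add_card_sdiff A C
  have hle := card_le_card (sdiff_subset_sdiff hAE (le_refl C))
  omega

theorem sdiff_subset_of_card_inter_eq (hAE : A ⊆ E) (heq : #(A ∩ C) = #A - #(E \ C))
    (hpos : 0 < #A - #(E \ C)) : E \ C ⊆ A := by
  have hsub : A \ C ⊆ E \ C := sdiff_subset_sdiff hAE (le_refl C)
  have hsplit := card_inter_add_card_sdiff A C
  have hAC : A \ C = E \ C := eq_of_subset_of_card_le hsub (by omega)
  exact hAC ▸ sdiff_subset

end Finset

theorem Ei_subset_Tslots {J : Type} [Fintype J] {r dl : J → ℕ} (j : J) :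
    Ei r dl j ⊆ Tslots dl := by
  intro t ht
  rw [Ei, mem_Icc] at ht
  exact mem_Icc.2 ⟨Nat.zero_le t, ht.2.trans (le_sup (mem_univ j))⟩

section Schedule

variable {J : Type} [Fintype J] [DecidableEq J] {r dl p : J → ℕ} {m : ℕ}
  {S : Fin m → ℕ → Option J}

def scheduledSlots (r dl : J → ℕ) (S : Fin m → ℕ → Option J) (j : J) : Finset ℕ :=
  (Ei r dl j).filter (fun t => ∃ k, S k t = some j)

namespace Feasible

variable (hS : Feasible r dl p m S)
include hS

theorem card_scheduledSlots (j : J) : #(scheduledSlots r dl S j) = p j := by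
  obtain ⟨hslot, hcount, hunique⟩ := hS
  have himage : ((univ ×ˢ Tslots dl).filter
      (fun kt : Fin m × ℕ => S kt.1 kt.2 = some j)).image Prod.snd = scheduledSlots r dl S j := by
    ext t
    simp only [mem_image, mem_filter, mem_product, scheduledSlots]
    constructor
    · rintro ⟨⟨k, t'⟩, ⟨-, hkt⟩, rfl⟩
      exact ⟨hslot k t' j hkt, k, hkt⟩
    · rintro ⟨hE, k, hk⟩
      exact ⟨(k, t), ⟨⟨mem_univ k, Ei_subset_Tslots j hE⟩, hk⟩, rfl⟩
  rw [← hcount j, ← himage]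
  -- a job never runs on two processors at once, so the projection to slots is injective
  refine card_image_of_injOn ?_
  rintro ⟨k, t⟩ hkt ⟨k', t'⟩ hkt' (rfl : t = t')
  simp only [coe_filter, Set.mem_ofPred_eq] at hkt hkt'
  exact Prod.ext (hunique t j k k' hkt.2 hkt'.2) rfl

theorem volJ_eq_card_inter (j : J) (C : Finset ℕ) :
    volJ S j C = #(scheduledSlots r dl S j ∩ C) := by
  rw [volJ]
  congr 1
  ext t
  simp only [mem_filter, scheduledSlots, mem_inter]
  exact ⟨fun ⟨htC, k, hk⟩ => ⟨⟨hS.1 k t j hk, k, hk⟩, htC⟩, fun ⟨⟨_, hk⟩, htC⟩ => ⟨htC, hk⟩⟩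

theorem fvJ_le_volJ (j : J) (C : Finset ℕ) : fvJ r dl p j C ≤ volJ S j C := by
  rw [hS.volJ_eq_card_inter, fvJ, ← hS.card_scheduledSlots j]
  exact card_sub_card_sdiff_le_card_inter (filter_subset _ _)

theorem scheduled_of_volJ_eq_fvJ {j : J} {C : Finset ℕ} (heq : volJ S j C = fvJ r dl p j C)
    (hpos : 0 < fvJ r dl p j C) : ∀ t ∈ Ei r dl j \ C, ∃ k, S k t = some j := by
  rw [hS.volJ_eq_card_inter, fvJ, ← hS.card_scheduledSlots j] at heq
  rw [fvJ, ← hS.card_scheduledSlots j] at hpos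
  intro t ht
  exact (mem_filter.1 (sdiff_subset_of_card_inter_eq (filter_subset _ _) heq hpos ht)).2

theorem volJ_eq_fvJ_of_volQ_eq_fvQ {C : Finset ℕ} (htight : volQ S C = fvQ r dl p C) (j : J) :
    volJ S j C = fvJ r dl p j C :=
  ((sum_eq_sum_iff_of_le fun i _ => hS.fvJ_le_volJ i C).1 htight.symm j (mem_univ j)).symm

end Feasible

end Schedule

theorem tight_set_structure_general (J : Type) [Fintype J] [DecidableEq J]
    (r dl p : J → ℕ)
    (m : ℕ)
    (S : Fin m → ℕ → Option J) (hS : Feasible r dl p m S)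
    (C : Finset ℕ) (htight : volQ S C = fvQ r dl p C) :
    (∀ j : J, volJ S j C = fvJ r dl p j C) ∧
    (∀ j : J, 0 < fvJ r dl p j C →
      ∀ t ∈ Ei r dl j \ C, ∃ k : Fin m, S k t = some j) :=
  ⟨hS.volJ_eq_fvJ_of_volQ_eq_fvQ htight,
    fun j => hS.scheduled_of_volJ_eq_fvJ (hS.volJ_eq_fvJ_of_volQ_eq_fvQ htight j)⟩

/-- If `S` schedules in `C` exactly the forced volume, then every job is scheduled in
`C` exactly its forced volume, and every job with positive forced volume in `C` is
scheduled at every slot of `E j \ C`. -/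
theorem tight_set_structure (J : Type) [Fintype J] [DecidableEq J]
    (r dl p : J → ℕ) (hrd : ∀ j, r j ≤ dl j) (hp : ∀ j, p j ≤ dl j - r j + 1)
    (m : ℕ) (hm : 1 ≤ m)
    (S : Fin m → ℕ → Option J) (hS : Feasible r dl p m S)
    (C : Finset ℕ) (hC : C ⊆ Tslots dl) (htight : volQ S C = fvQ r dl p C) :
    (∀ j : J, volJ S j C = fvJ r dl p j C) ∧
    (∀ j : J, 0 < fvJ r dl p j C →
      ∀ t ∈ Ei r dl j \ C, ∃ k : Fin m, S k t = some j) :=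
  tight_set_structure_general J r dl p m S hS C htight
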